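/- Fix real k_s, k_m, k_ℓ with k_m ≥ 0 and set 𝛂 = k_s + k_ℓ − 1/2, 𝛃 = k_ℓ − 1/2. Then any two distinct members of Π_k are disjoint: if w, w' ∈ W, 0 ≤ i, i' ≤ r, ξ ∈ D_k(Θ_i), ξ' ∈ D_k(Θ_{i'}), and the sets L = w·{(ξ_1,…,ξ_i, √−1 t_{i+1},…,√−1 t_r) : t_{i+1},…,t_r ∈ ℝ} and L' = w'·{(ξ'_1,…,ξ'_{i'}, √−1 t_{i'+1},…,√−1 t_r) : t_{i'+1},…,t_r ∈ ℝ} have a common point, then L = L'. -/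

import Mathlib

noncomputable section

/-- The set `D_k(Θ_i)` of discrete spectral parameters (for `i = 0` this is the
singleton consisting of the empty tuple). -/
def DkSet (α β km : ℝ) (i : ℕ) : Set (Fin i → ℝ) :=
  {ξ | (∀ h : 0 < i, ∃ n : ℕ, ξ ⟨0, h⟩ + |β| - α - 1 = 2 * (n : ℝ)) ∧
       (∀ h : 0 < i, ξ ⟨i - 1, by omega⟩ < 0) ∧
       (∀ j : ℕ, ∀ h : j + 1 < i,
         ∃ n : ℕ, ξ ⟨j + 1, h⟩ - ξ ⟨j, by omega⟩ - 2 * km = 2 * (n : ℝ))}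

/-- Action on `ℂ^r` of the element of the Weyl group of type `BC_r` given by the
sign vector `ε` and the permutation `σ`. -/
def wActC (r : ℕ) (ε : Fin r → ℤˣ) (σ : Equiv.Perm (Fin r)) (z : Fin r → ℂ) : Fin r → ℂ :=
  fun j => ((ε j : ℤ) : ℂ) * z (σ⁻¹ j)

/-- The set `{(ξ_1, …, ξ_i, √−1 t_{i+1}, …, √−1 t_r) : t ∈ ℝ^{r−i}} ⊆ ℂ^r`. -/
def baseSet (r i : ℕ) (ξ : Fin i → ℝ) : Set (Fin r → ℂ) :=
  {z | (∀ j : Fin r, ∀ h : (j : ℕ) < i, z j = ((ξ ⟨(j : ℕ), h⟩ : ℝ) : ℂ)) ∧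
       (∀ j : Fin r, i ≤ (j : ℕ) → (z j).re = 0)}

/-! Since `km ≥ 0`, the entries of `ξ ∈ D_k(Θ_i)` increase and the last one is negative, so none
of them vanishes. Hence in a point `u` of `w · {(ξ, √−1 t)}` the coordinates with nonzero real part
are exactly those carrying (signed, permuted) entries of `ξ`, and the whole set is recovered from
`u` alone: it is the product over `j` of `{u j}` or of the imaginary axis, according to whether
`(u j).re ≠ 0`. Two such sets with a common point are therefore equal. -/

theorem monotone_of_mem_DkSet {α β km : ℝ} (hkm : 0 ≤ km) {i : ℕ} {ξ : Fin i → ℝ}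
    (hξ : ξ ∈ DkSet α β km i) : Monotone ξ := by
  cases i with
  | zero => exact fun a => a.elim0
  | succ n =>
    refine Fin.monotone_iff_le_succ.mpr fun j => ?_
    obtain ⟨m, hm⟩ := hξ.2.2 j (by omega)
    have hm0 : (0 : ℝ) ≤ 2 * m := by positivity
    change ξ ⟨j, _⟩ ≤ ξ ⟨j + 1, _⟩
    linarith

theorem neg_of_mem_DkSet {α β km : ℝ} (hkm : 0 ≤ km) {i : ℕ} {ξ : Fin i → ℝ}
    (hξ : ξ ∈ DkSet α β km i) (j : Fin i) : ξ j < 0 := by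
  have hi : 0 < i := j.pos
  calc ξ j ≤ ξ ⟨i - 1, by omega⟩ :=
        monotone_of_mem_DkSet hkm hξ (Fin.mk_le_mk.mpr (by omega))
    _ < 0 := hξ.2.1 hi

def sliceThrough (a : ℂ) : Set ℂ :=
  if a.re = 0 then {w | w.re = 0} else {a}

def piSliceThrough {ι : Type*} (u : ι → ℂ) : Set (ι → ℂ) :=
  Set.univ.pi fun j => sliceThrough (u j)

theorem ofReal_mul_mem_sliceThrough_iff {c : ℝ} (hc : c ≠ 0) {a b : ℂ} :
    (c : ℂ) * b ∈ sliceThrough (c * a) ↔ b ∈ sliceThrough a := by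
  have hc' : (c : ℂ) ≠ 0 := Complex.ofReal_ne_zero.mpr hc
  simp only [sliceThrough, Complex.re_ofReal_mul, mul_eq_zero, hc, false_or]
  split_ifs <;> simp [hc, hc']

theorem wActC_surjective (r : ℕ) (ε : Fin r → ℤˣ) (σ : Equiv.Perm (Fin r)) :
    Function.Surjective (wActC r ε σ) := by
  refine fun y => ⟨wActC r (fun j => ε (σ j)) σ⁻¹ y, funext fun j => ?_⟩
  simp only [wActC, inv_inv, Equiv.Perm.coe_inv, Equiv.apply_symm_apply, ← mul_assoc]
  rw [← Int.cast_mul, ← Units.val_mul, Int.units_mul_self, Units.val_one, Int.cast_one, one_mul]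

theorem wActC_mem_piSliceThrough_iff {r : ℕ} (ε : Fin r → ℤˣ) (σ : Equiv.Perm (Fin r))
    (z v : Fin r → ℂ) :
    wActC r ε σ v ∈ piSliceThrough (wActC r ε σ z) ↔ v ∈ piSliceThrough z := by
  have hε : ∀ j, ((ε j : ℤ) : ℝ) ≠ 0 := fun j => by exact_mod_cast (ε j).ne_zero
  simp only [piSliceThrough, Set.mem_univ_pi, wActC, ← Complex.ofReal_intCast,
    ofReal_mul_mem_sliceThrough_iff (hε _)]
  exact σ⁻¹.forall_congr_right (q := fun j => v j ∈ sliceThrough (z j))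

theorem image_wActC_piSliceThrough {r : ℕ} (ε : Fin r → ℤˣ) (σ : Equiv.Perm (Fin r))
    (z : Fin r → ℂ) :
    wActC r ε σ '' piSliceThrough z = piSliceThrough (wActC r ε σ z) := by
  calc wActC r ε σ '' piSliceThrough z
      = wActC r ε σ '' (wActC r ε σ ⁻¹' piSliceThrough (wActC r ε σ z)) := by
        ext v
        simp only [Set.mem_image, Set.mem_preimage, wActC_mem_piSliceThrough_iff]
    _ = piSliceThrough (wActC r ε σ z) := (wActC_surjective r ε σ).image_preimage _

theorem baseSet_eq_piSliceThrough {r i : ℕ} {ξ : Fin i → ℝ} (hξ : ∀ j, ξ j ≠ 0)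
    {z : Fin r → ℂ} (hz : z ∈ baseSet r i ξ) : baseSet r i ξ = piSliceThrough z := by
  have hslice : ∀ j : Fin r, sliceThrough (z j) =
      if h : (j : ℕ) < i then {(ξ ⟨j, h⟩ : ℂ)} else {w | w.re = 0} := by
    intro j
    split_ifs with hj
    · rw [sliceThrough, hz.1 j hj, if_neg (by simpa using hξ _)]
    · rw [sliceThrough, if_pos (hz.2 j (not_lt.mp hj))]
  ext v
  simp only [baseSet, piSliceThrough, Set.mem_ofPred_eq, Set.mem_univ_pi, hslice, ← forall_and]
  refine forall_congr' fun j => ?_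
  split_ifs with hj
  · simp [hj]
  · simp [not_lt.mp hj]

theorem image_wActC_baseSet_eq_piSliceThrough {r i : ℕ} {ξ : Fin i → ℝ} (hξ : ∀ j, ξ j ≠ 0)
    {ε : Fin r → ℤˣ} {σ : Equiv.Perm (Fin r)} {u : Fin r → ℂ}
    (hu : u ∈ wActC r ε σ '' baseSet r i ξ) :
    wActC r ε σ '' baseSet r i ξ = piSliceThrough u := by
  obtain ⟨z, hz, rfl⟩ := hu
  rw [baseSet_eq_piSliceThrough hξ hz, image_wActC_piSliceThrough]

theorem stmt9_general (km α β : ℝ)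
    (hkm : 0 ≤ km) (r : ℕ)
    (i i' : ℕ)
    (ξ : Fin i → ℝ) (hξ : ξ ∈ DkSet α β km i)
    (ξ' : Fin i' → ℝ) (hξ' : ξ' ∈ DkSet α β km i')
    (ε ε' : Fin r → ℤˣ) (σ σ' : Equiv.Perm (Fin r))
    (h : ((wActC r ε σ '' baseSet r i ξ) ∩ (wActC r ε' σ' '' baseSet r i' ξ')).Nonempty) :
    wActC r ε σ '' baseSet r i ξ = wActC r ε' σ' '' baseSet r i' ξ' := by
  obtain ⟨u, hu, hu'⟩ := h
  rw [image_wActC_baseSet_eq_piSliceThrough (fun j => (neg_of_mem_DkSet hkm hξ j).ne) hu,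
    image_wActC_baseSet_eq_piSliceThrough (fun j => (neg_of_mem_DkSet hkm hξ' j).ne) hu']

theorem stmt9 (ks km kl α β : ℝ) (hα : α = ks + kl - 1 / 2) (hβ : β = kl - 1 / 2)
    (hkm : 0 ≤ km) (r : ℕ)
    (i i' : ℕ) (hir : i ≤ r) (hi'r : i' ≤ r)
    (ξ : Fin i → ℝ) (hξ : ξ ∈ DkSet α β km i)
    (ξ' : Fin i' → ℝ) (hξ' : ξ' ∈ DkSet α β km i')
    (ε ε' : Fin r → ℤˣ) (σ σ' : Equiv.Perm (Fin r))
    (h : ((wActC r ε σ '' baseSet r i ξ) ∩ (wActC r ε' σ' '' baseSet r i' ξ')).Nonempty) :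
    wActC r ε σ '' baseSet r i ξ = wActC r ε' σ' '' baseSet r i' ξ' :=
  stmt9_general km α β hkm r i i' ξ hξ ξ' hξ' ε ε' σ σ' h
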